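/- Let H be a Hilbert space and suppose Q is self-adjoint and ‖(Q - i)h‖ ≥ κ‖h‖_W for all h ∈ dom(Q), where ‖·‖_W ≥ ‖·‖ is a stronger norm on dom(Q). Then for every real c with |c| ≥ 1, ‖(Q - ic)⁻¹u‖_W ≤ κ⁻¹|c|⁻¹(1 + M)‖u‖_W for all u ∈ dom(Q), where M = sup{‖Qh‖/‖h‖_W : 0 ≠ h ∈ dom(Q)} < ∞. -/

import Mathlib

open scoped InnerProductSpace

/-- If `Q` is self-adjoint, `‖(Q - i)h‖ ≥ κ‖h‖_W` with `‖·‖_W ≥ ‖·‖` on `dom(Q)`, and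
`‖Qh‖ ≤ M‖h‖_W`, then for every real `c` with `|c| ≥ 1` the resolvent satisfies
`‖(Q - ic)⁻¹u‖_W ≤ κ⁻¹|c|⁻¹(1 + M)‖u‖_W` for all `u ∈ dom(Q)`. -/
theorem stmt_18 {H : Type*} [NormedAddCommGroup H] [InnerProductSpace ℂ H] [CompleteSpace H]
    (Q : H →ₗ.[ℂ] H) (hQ : IsSelfAdjoint Q)
    (W : Q.domain → ℝ) (κ M : ℝ) (hκ : 0 < κ) (hM : 0 ≤ M)
    (hW : ∀ h : Q.domain, ‖(h : H)‖ ≤ W h)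
    (hlow : ∀ h : Q.domain, κ * W h ≤ ‖Q h - Complex.I • (h : H)‖)
    (hbdd : ∀ h : Q.domain, ‖Q h‖ ≤ M * W h) :
    ∀ c : ℝ, 1 ≤ |c| → ∀ u v : Q.domain,
      Q v - (Complex.I * (c : ℂ)) • (v : H) = u →
      W v ≤ κ⁻¹ * |c|⁻¹ * (1 + M) * W u := by
  have hdense := hQ.dense_domain
  have hsym : ∀ x y : Q.domain, ⟪Q x, (y : H)⟫_ℂ = ⟪(x : H), Q y⟫_ℂ := by
    have h := Q.adjoint_isFormalAdjoint hdense
    rw [LinearPMap.isSelfAdjoint_def] at hQ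
    rw [hQ] at h
    exact h
  -- resolvent-type lower bound
  have key : ∀ (c : ℝ) (h : Q.domain),
      |c| * ‖(h : H)‖ ≤ ‖Q h - (Complex.I * (c : ℂ)) • (h : H)‖ := by
    intro c h
    have hre : (Complex.re ⟪Q h, (Complex.I * (c : ℂ)) • (h : H)⟫_ℂ) = 0 := by
      have hreal : ⟪Q h, (h : H)⟫_ℂ = (starRingEnd ℂ) ⟪Q h, (h : H)⟫_ℂ := by
        rw [inner_conj_symm]; exact hsym h h
      have him : (⟪Q h, (h : H)⟫_ℂ).im = 0 := by
        have := congrArg Complex.im hreal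
        simp only [Complex.conj_im] at this
        linarith
      rw [inner_smul_right]
      simp [Complex.mul_re, Complex.mul_im, him]
    have hsq : (|c| * ‖(h : H)‖) ^ 2 ≤ ‖Q h - (Complex.I * (c : ℂ)) • (h : H)‖ ^ 2 := by
      rw [@norm_sub_sq ℂ]
      simp only [RCLike.re_to_complex]
      rw [hre]
      have : ‖(Complex.I * (c : ℂ)) • (h : H)‖ = |c| * ‖(h : H)‖ := by
        rw [norm_smul]
        simp [Complex.norm_real]
      rw [this]
      nlinarith [norm_nonneg (Q h), sq_nonneg (‖Q h‖)]
    have h1 : 0 ≤ |c| * ‖(h : H)‖ := by positivity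
    nlinarith [norm_nonneg (Q h - (Complex.I * (c : ℂ)) • (h : H))]
  intro c hc u v huv
  have hcpos : (0 : ℝ) < |c| := lt_of_lt_of_le one_pos hc
  -- w = u + I(c-1) v  in the domain
  set w : Q.domain := u + (Complex.I * ((c : ℂ) - 1)) • v with hw_def
  have hQv : Q v = (u : H) + (Complex.I * (c : ℂ)) • (v : H) := by
    rw [← huv]; ring_nf; abel
  have hwcoe : ((w : H)) = Q v - Complex.I • (v : H) := by
    simp only [hw_def, Submodule.coe_add, Submodule.coe_smul, hQv]
    module
  have hQw : Q w = Q u + (Complex.I * ((c : ℂ) - 1)) • Q v := by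
    rw [hw_def, LinearPMap.map_add, LinearPMap.map_smul]
  have hQwc : Q w - (Complex.I * (c : ℂ)) • (w : H) = Q u - Complex.I • (u : H) := by
    rw [hQw]
    simp only [hw_def, Submodule.coe_add, Submodule.coe_smul, hQv]
    have hI : Complex.I * Complex.I = -1 := Complex.I_mul_I
    match_scalars <;> ring_nf <;> rw [Complex.I_sq] <;> ring
  have step1 : κ * W v ≤ ‖(w : H)‖ := by rw [hwcoe]; exact hlow v
  have step2 : |c| * ‖(w : H)‖ ≤ ‖Q u - Complex.I • (u : H)‖ := by
    rw [← hQwc]; exact key c w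
  have step3 : ‖Q u - Complex.I • (u : H)‖ ≤ (1 + M) * W u := by
    calc ‖Q u - Complex.I • (u : H)‖ ≤ ‖Q u‖ + ‖Complex.I • (u : H)‖ := norm_sub_le _ _
    _ = ‖Q u‖ + ‖(u : H)‖ := by rw [norm_smul]; simp
    _ ≤ M * W u + W u := add_le_add (hbdd u) (hW u)
    _ = (1 + M) * W u := by ring
  have : κ * W v ≤ |c|⁻¹ * ((1 + M) * W u) := by
    rw [le_inv_mul_iff₀ hcpos]
    calc |c| * (κ * W v) ≤ |c| * ‖(w : H)‖ := by
          exact mul_le_mul_of_nonneg_left step1 (le_of_lt hcpos)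
    _ ≤ ‖Q u - Complex.I • (u : H)‖ := step2
    _ ≤ (1 + M) * W u := step3
  calc W v ≤ κ⁻¹ * (|c|⁻¹ * ((1 + M) * W u)) := by
        rw [← le_inv_mul_iff₀ hκ] at this; exact this
  _ = κ⁻¹ * |c|⁻¹ * (1 + M) * W u := by ring
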